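/- Define R : [0,∞) → ℝ by R(k+α) = (1/2 − α)k − α²/2 for k ∈ ℤ≥0 and α ∈ [0,1). Then P[R](k+α) = (−1/6 + α/2 − α²/2) + o(1) as k → ∞, and consequently P²[R](x) → −1/12 as x → ∞. -/

import Mathlib

/-!
On each cell `[k, k + 1)` both `R` and the profile `g(x) = -1/6 + α/2 - α²/2` are polynomials
in `α = {x}`, so their primitives are explicit: `∫₀ˣ R = x g(x) + c(x)/6` and
`∫₀ˣ g = -x/12 - c(x)/12` for a bounded periodic `c`. Hence `P[R] - g = O(1/x)` and
`P[g] → -1/12`, and `P²[R] = P[g] + P[P[R] - g] → -1/12` because the Cesàro mean of a function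
tending to `0` tends to `0`.
-/

open Filter intervalIntegral

/-- The continuous Cesàro operator (real-valued version). -/
noncomputable def cesaroPR (f : ℝ → ℝ) : ℝ → ℝ :=
  fun x => (1 / x) * ∫ t in (0 : ℝ)..x, f t

/-- The remainder function `R(k+α) = (1/2 - α)k - α²/2`. -/
noncomputable def remainderR : ℝ → ℝ :=
  fun x => (1 / 2 - Int.fract x) * (⌊x⌋ : ℝ) - (Int.fract x) ^ 2 / 2

open MeasureTheory Set Topology
open scoped Interval

theorem integral_quadratic (a b c α : ℝ) :
    ∫ s in (0 : ℝ)..α, (a + b * s + c * s ^ 2) = a * α + b * α ^ 2 / 2 + c * α ^ 3 / 3 := by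
  have hderiv (s : ℝ) : HasDerivAt (fun s => a * s + b * s ^ 2 / 2 + c * s ^ 3 / 3)
      (a + b * s + c * s ^ 2) s := by
    refine ((((hasDerivAt_id s).const_mul a).add
      (((hasDerivAt_pow 2 s).const_mul b).div_const 2)).add
      (((hasDerivAt_pow 3 s).const_mul c).div_const 3)).congr_deriv ?_
    norm_num
    ring
  rw [integral_eq_sub_of_hasDerivAt (fun s _ => hderiv s)
    (Continuous.intervalIntegrable (by fun_prop) _ _)]
  ring

theorem integral_floor_fract_cell (Φ : ℝ → ℝ → ℝ) (n : ℤ) {α : ℝ} (h₀ : 0 ≤ α)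
    (h₁ : α ≤ 1) :
    ∫ t in (n : ℝ)..n + α, Φ ⌊t⌋ (Int.fract t) = ∫ s in (0 : ℝ)..α, Φ n s := by
  have hshift :=
    integral_comp_add_left (fun t => Φ ⌊t⌋ (Int.fract t)) (n : ℝ) (a := 0) (b := α)
  rw [add_zero] at hshift
  rw [← hshift]
  refine integral_congr_ae ?_
  have hne : ∀ᵐ s : ℝ, s ≠ 1 := by simp [ae_iff, measure_singleton]
  filter_upwards [hne] with s hs hmem
  rw [uIoc_of_le h₀] at hmem
  have hs01 : s ∈ Ico (0 : ℝ) 1 := ⟨hmem.1.le, lt_of_le_of_ne (hmem.2.trans h₁) hs⟩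
  simp [Int.floor_intCast_add, Int.fract_intCast_add, Int.fract_eq_self.2 hs01,
    Int.floor_eq_zero_iff.2 hs01]

theorem integral_floor_fract {Φ : ℝ → ℝ → ℝ}
    (hint : ∀ a b, IntervalIntegrable (fun t => Φ ⌊t⌋ (Int.fract t)) volume a b)
    {x : ℝ} (hx : 0 ≤ x) :
    ∫ t in (0 : ℝ)..x, Φ ⌊t⌋ (Int.fract t)
      = (∑ i ∈ Finset.range ⌊x⌋₊, ∫ s in (0 : ℝ)..1, Φ i s)
        + ∫ s in (0 : ℝ)..Int.fract x, Φ ⌊x⌋ s := by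
  have hcells := sum_integral_adjacent_intervals
    (f := fun t => Φ ⌊t⌋ (Int.fract t)) (a := fun i : ℕ => (i : ℝ))
    (n := ⌊x⌋₊) (fun _ _ => hint _ _)
  simp only [Nat.cast_zero, Nat.cast_add, Nat.cast_one] at hcells
  rw [← integral_add_adjacent_intervals (hint 0 ⌊x⌋₊) (hint _ x), ← hcells]
  congr 1
  · refine Finset.sum_congr rfl fun i _ => ?_
    simpa using integral_floor_fract_cell Φ i zero_le_one le_rfl
  · have hcell := integral_floor_fract_cell Φ ⌊x⌋ (Int.fract_nonneg x) (Int.fract_lt_one x).le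
    rw [Int.floor_add_fract] at hcell
    rwa [natCast_floor_eq_intCast_floor hx]

theorem measurable_cesaroPR {f : ℝ → ℝ} (hf : ∀ a b, IntervalIntegrable f volume a b) :
    Measurable (cesaroPR f) := by
  have hprim := (continuous_primitive hf 0).measurable
  unfold cesaroPR
  fun_prop

theorem abs_cesaroPR {f : ℝ → ℝ} {x : ℝ} (hx : 0 < x) :
    |cesaroPR f x| = |∫ t in (0 : ℝ)..x, f t| / x := by
  rw [cesaroPR, abs_mul, abs_of_pos (one_div_pos.2 hx), one_div_mul_eq_div]

theorem abs_cesaroPR_le {f : ℝ → ℝ} {x C : ℝ} (hx : 0 < x)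
    (hf : ∀ t ∈ Ι 0 x, |f t| ≤ C) : |cesaroPR f x| ≤ C := by
  have hint : ‖∫ t in (0 : ℝ)..x, f t‖ ≤ C * |x - 0| :=
    intervalIntegral.norm_integral_le_of_norm_le_const hf
  rw [Real.norm_eq_abs, sub_zero, abs_of_pos hx] at hint
  rwa [abs_cesaroPR hx, div_le_iff₀ hx]

theorem cesaroPR_add {f g : ℝ → ℝ} {x : ℝ} (hf : IntervalIntegrable f volume 0 x)
    (hg : IntervalIntegrable g volume 0 x) :
    cesaroPR (f + g) x = cesaroPR f x + cesaroPR g x := by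
  simp only [cesaroPR, Pi.add_apply, integral_add hf hg, mul_add]

theorem tendsto_cesaroPR_of_tendsto_zero {f : ℝ → ℝ}
    (hf : ∀ x, 0 ≤ x → IntervalIntegrable f volume 0 x) (hlim : Tendsto f atTop (𝓝 0)) :
    Tendsto (cesaroPR f) atTop (𝓝 0) := by
  rw [Metric.tendsto_atTop]
  intro ε hε
  obtain ⟨A, hA⟩ := Metric.tendsto_atTop.1 hlim (ε / 2) (half_pos hε)
  set A₀ := max A 0
  set C := |∫ t in (0 : ℝ)..A₀, f t|
  refine ⟨max A₀ (2 * C / ε) + 1, fun x hx => ?_⟩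
  have hA₀x : A₀ < x := by linarith [le_max_left A₀ (2 * C / ε)]
  have hx₀ : 0 < x := lt_of_le_of_lt (le_max_right A 0) hA₀x
  have hCx : 2 * C / ε < x := by linarith [le_max_right A₀ (2 * C / ε)]
  have htail : ‖∫ t in A₀..x, f t‖ ≤ ε / 2 * |x - A₀| := by
    refine intervalIntegral.norm_integral_le_of_norm_le_const fun t ht => ?_
    rw [uIoc_of_le hA₀x.le] at ht
    simpa using (hA t ((le_max_left A 0).trans ht.1.le)).le
  have hsplit := integral_add_adjacent_intervals (hf A₀ (le_max_right A 0))
    ((hf A₀ (le_max_right A 0)).symm.trans (hf x hx₀.le))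
  rw [Real.norm_eq_abs, abs_of_pos (sub_pos.2 hA₀x)] at htail
  have hbound : |∫ t in (0 : ℝ)..x, f t| < ε * x := by
    rw [← hsplit]
    have := (div_lt_iff₀ hε).1 hCx
    calc _ ≤ C + |∫ t in A₀..x, f t| := abs_add_le _ _
      _ < ε * x := by nlinarith [le_max_right A 0]
  rwa [dist_zero_right, Real.norm_eq_abs, abs_cesaroPR hx₀, div_lt_iff₀ hx₀]

theorem tendsto_div_atTop_zero_of_abs_le {u : ℝ → ℝ} {C : ℝ} (hu : ∀ x, |u x| ≤ C) :
    Tendsto (fun x => u x / x) atTop (𝓝 0) := by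
  have hbdd : IsBoundedUnder (· ≤ ·) atTop fun x => ‖u x‖ := isBoundedUnder_of ⟨C, hu⟩
  simpa [div_eq_inv_mul] using tendsto_inv_atTop_zero.zero_mul_isBoundedUnder_le hbdd

noncomputable def cesaroProfile : ℝ → ℝ :=
  fun x => -(1 / 6) + Int.fract x / 2 - (Int.fract x) ^ 2 / 2

/-- `2 B₃({x})`, twice the periodic third Bernoulli function. -/
noncomputable def fractCubic (x : ℝ) : ℝ :=
  Int.fract x * (1 - Int.fract x) * (1 - 2 * Int.fract x)

theorem abs_fractCubic_le (x : ℝ) : |fractCubic x| ≤ 1 := by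
  have h₀ := Int.fract_nonneg x
  have h₁ := Int.fract_lt_one x
  rw [fractCubic, abs_le]
  constructor <;> nlinarith [mul_nonneg h₀ (sub_nonneg.2 h₁.le)]

theorem measurable_remainderR : Measurable remainderR := by
  unfold remainderR
  fun_prop

theorem abs_remainderR_le (t : ℝ) : |remainderR t| ≤ |t| + 1 := by
  have h₀ := Int.fract_nonneg t
  have h₁ := Int.fract_lt_one t
  have hfloor : (⌊t⌋ : ℝ) = t - Int.fract t := by rw [Int.self_sub_fract]
  unfold remainderR
  rw [hfloor, abs_le]
  constructor <;> nlinarith [le_abs_self t, neg_abs_le t]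

theorem abs_cesaroProfile_le (t : ℝ) : |cesaroProfile t| ≤ 1 / 6 := by
  have h₀ := Int.fract_nonneg t
  have h₁ := Int.fract_lt_one t
  unfold cesaroProfile
  rw [abs_le]
  constructor <;> nlinarith

theorem intervalIntegrable_remainderR (a b : ℝ) : IntervalIntegrable remainderR volume a b :=
  (Continuous.intervalIntegrable (by fun_prop) a b).mono_fun'
    measurable_remainderR.aestronglyMeasurable (ae_of_all _ abs_remainderR_le)

theorem intervalIntegrable_cesaroProfile (a b : ℝ) :
    IntervalIntegrable cesaroProfile volume a b :=
  intervalIntegrable_const.mono_fun' (by unfold cesaroProfile; fun_prop)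
    (ae_of_all _ abs_cesaroProfile_le)

theorem integral_remainderR {x : ℝ} (hx : 0 ≤ x) :
    ∫ t in (0 : ℝ)..x, remainderR t = x * cesaroProfile x + fractCubic x / 6 := by
  have hcell (k α : ℝ) : ∫ s in (0 : ℝ)..α, ((1 / 2 - s) * k - s ^ 2 / 2)
      = k * (α / 2 - α ^ 2 / 2) - α ^ 3 / 6 := by
    rw [integral_congr (g := fun s => k / 2 + -k * s + -(1 / 2) * s ^ 2) fun s _ => by ring,
      integral_quadratic]
    ring
  have hfloor : (⌊x⌋₊ : ℝ) = x - Int.fract x := by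
    rw [natCast_floor_eq_intCast_floor hx, Int.self_sub_fract]
  calc ∫ t in (0 : ℝ)..x, remainderR t
      = (∑ i ∈ Finset.range ⌊x⌋₊, ∫ s in (0 : ℝ)..1, ((1 / 2 - s) * i - s ^ 2 / 2))
        + ∫ s in (0 : ℝ)..Int.fract x, ((1 / 2 - s) * ⌊x⌋ - s ^ 2 / 2) :=
        integral_floor_fract (Φ := fun k s => (1 / 2 - s) * k - s ^ 2 / 2)
          intervalIntegrable_remainderR hx
    _ = _ := by
      have hunit (k : ℝ) : ∫ s in (0 : ℝ)..1, ((1 / 2 - s) * k - s ^ 2 / 2) = -(1 / 6) := by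
        rw [hcell]
        ring
      simp only [hunit, hcell, Finset.sum_const, Finset.card_range, nsmul_eq_mul]
      rw [← natCast_floor_eq_intCast_floor hx, hfloor]
      unfold cesaroProfile fractCubic
      ring

theorem integral_cesaroProfile {x : ℝ} (hx : 0 ≤ x) :
    ∫ t in (0 : ℝ)..x, cesaroProfile t = -(x / 12) - fractCubic x / 12 := by
  have hcell (α : ℝ) : ∫ s in (0 : ℝ)..α, (-(1 / 6) + s / 2 - s ^ 2 / 2)
      = -(α / 6) + α ^ 2 / 4 - α ^ 3 / 6 := by
    rw [integral_congr (g := fun s => -(1 / 6) + 1 / 2 * s + -(1 / 2) * s ^ 2)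
      fun s _ => by ring, integral_quadratic]
    ring
  have hfloor : (⌊x⌋₊ : ℝ) = x - Int.fract x := by
    rw [natCast_floor_eq_intCast_floor hx, Int.self_sub_fract]
  calc ∫ t in (0 : ℝ)..x, cesaroProfile t
      = (∑ _i ∈ Finset.range ⌊x⌋₊, ∫ s in (0 : ℝ)..1, (-(1 / 6) + s / 2 - s ^ 2 / 2))
        + ∫ s in (0 : ℝ)..Int.fract x, (-(1 / 6) + s / 2 - s ^ 2 / 2) :=
        integral_floor_fract (Φ := fun _ s => -(1 / 6) + s / 2 - s ^ 2 / 2)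
          intervalIntegrable_cesaroProfile hx
    _ = _ := by
      simp only [hcell, Finset.sum_const, Finset.card_range, nsmul_eq_mul, hfloor]
      unfold fractCubic
      ring

theorem intervalIntegrable_cesaroPR_remainderR {x : ℝ} (hx : 0 ≤ x) :
    IntervalIntegrable (cesaroPR remainderR) volume 0 x := by
  refine (intervalIntegrable_const (c := x + 1)).mono_fun'
    (measurable_cesaroPR intervalIntegrable_remainderR).aestronglyMeasurable
    (ae_restrict_of_forall_mem measurableSet_uIoc fun t ht => ?_)
  rw [uIoc_of_le hx] at ht
  refine abs_cesaroPR_le ht.1 fun s hs => (abs_remainderR_le s).trans ?_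
  rw [uIoc_of_le ht.1.le] at hs
  rw [abs_of_pos hs.1]
  linarith [hs.2, ht.2]

theorem cesaroPR_remainderR_sub_cesaroProfile {x : ℝ} (hx : 0 < x) :
    cesaroPR remainderR x - cesaroProfile x = fractCubic x / x / 6 := by
  rw [cesaroPR, integral_remainderR hx.le]
  field_simp
  ring

theorem cesaroPR_cesaroProfile {x : ℝ} (hx : 0 < x) :
    cesaroPR cesaroProfile x = -(1 / 12) - fractCubic x / x / 12 := by
  rw [cesaroPR, integral_cesaroProfile hx.le]
  field_simp

theorem tendsto_cesaroPR_remainderR_sub_cesaroProfile :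
    Tendsto (fun x => cesaroPR remainderR x - cesaroProfile x) atTop (𝓝 0) := by
  have hlim := (tendsto_div_atTop_zero_of_abs_le abs_fractCubic_le).div_const 6
  rw [zero_div] at hlim
  exact hlim.congr' ((eventually_gt_atTop 0).mono fun x hx =>
    (cesaroPR_remainderR_sub_cesaroProfile hx).symm)

theorem tendsto_cesaroPR_cesaroProfile :
    Tendsto (cesaroPR cesaroProfile) atTop (𝓝 (-(1 / 12))) := by
  have hlim := (tendsto_const_nhds (x := -(1 / 12 : ℝ))).sub
    ((tendsto_div_atTop_zero_of_abs_le abs_fractCubic_le).div_const 12)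
  rw [zero_div, sub_zero] at hlim
  exact hlim.congr' ((eventually_gt_atTop 0).mono fun x hx => (cesaroPR_cesaroProfile hx).symm)

/-- `P[R](k+α) = (-1/6 + α/2 - α²/2) + o(1)` as `x → ∞`, and consequently
`P²[R](x) → -1/12`. -/
theorem cesaro_remainder :
    Tendsto (fun x : ℝ =>
        cesaroPR remainderR x - (-(1 / 6) + Int.fract x / 2 - (Int.fract x) ^ 2 / 2))
      atTop (nhds 0)
    ∧ Tendsto (cesaroPR (cesaroPR remainderR)) atTop (nhds (-(1 / 12))) := by
  have hint (x : ℝ) (hx : 0 ≤ x) :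
      IntervalIntegrable (cesaroPR remainderR - cesaroProfile) volume 0 x :=
    (intervalIntegrable_cesaroPR_remainderR hx).sub (intervalIntegrable_cesaroProfile 0 x)
  have hcorrection := tendsto_cesaroPR_of_tendsto_zero hint
    tendsto_cesaroPR_remainderR_sub_cesaroProfile
  have hsum := tendsto_cesaroPR_cesaroProfile.add hcorrection
  rw [add_zero] at hsum
  refine ⟨tendsto_cesaroPR_remainderR_sub_cesaroProfile, hsum.congr' ?_⟩
  filter_upwards [eventually_ge_atTop 0] with x hx
  rw [← cesaroPR_add (intervalIntegrable_cesaroProfile 0 x) (hint x hx), add_sub_cancel]
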